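/- Let α, β ∈ CBV*[0,1] and v, w ∈ CBV[0,1] satisfy α[1] = β[1] = 0 (where 1 is the constant function) and v + w = 1 pointwise. Define F₁(x) = α[x]v + β[x]w. Then for every n ≥ 0, ‖F₁^{n+2}‖ ≤ ‖α - β‖ · |α[v] - β[v]|ⁿ · ‖α[v]v + β[v]w‖_{BV}; in particular the spectral radius satisfies r(F₁) ≤ |α[v] - β[v]|. -/

import Mathlib

open Set

/-!
Write `F₁ = rankTwoMap α β v w` and `δ = α - β`. Because `v + w = 1` and `α`, `β` kill constants,
a functional `γ` with `γ 1 = 0` satisfies `γ (F₁ y) = δ y · γ v`. Hence `F₁ (F₁ y) = δ y · F₁ v` and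
`δ (F₁ y) = δ y · δ v`, so `F₁^{n+2} x = δ x · (δ v)ⁿ · F₁ v`, and the first bound follows from the
homogeneity of the BV-norm. For the spectral radius, the powers `F₁⁰` and `F₁¹` only enlarge the
constant.
-/

def IsCBV (x : ℝ → ℝ) : Prop :=
  ContinuousOn x (Set.Icc 0 1) ∧ BoundedVariationOn x (Set.Icc 0 1)

noncomputable def bvNorm (x : ℝ → ℝ) : ℝ :=
  |x 0| + (eVariationOn x (Set.Icc 0 1)).toReal

section Variation

variable {α E : Type*} [LinearOrder α]

theorem eVariationOn.const_smul {𝕜 : Type*} [SeminormedRing 𝕜] [SeminormedAddCommGroup E]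
    [Module 𝕜 E] [NormSMulClass 𝕜 E] (c : 𝕜) (f : α → E) (s : Set α) :
    eVariationOn (c • f) s = ‖c‖₊ * eVariationOn f s := by
  simp only [eVariationOn, Pi.smul_apply, edist_smul₀, ENNReal.smul_def, smul_eq_mul,
    ← Finset.mul_sum, ENNReal.mul_iSup]

theorem eVariationOn.const_add [AddGroup E] [PseudoEMetricSpace E] [IsIsometricVAdd E E]
    (a : E) (f : α → E) (s : Set α) :
    eVariationOn (fun t => a + f t) s = eVariationOn f s := by
  simp only [eVariationOn, edist_add_left]

end Variation

theorem bvNorm_nonneg (f : ℝ → ℝ) : 0 ≤ bvNorm f :=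
  add_nonneg (abs_nonneg _) ENNReal.toReal_nonneg

theorem bvNorm_smul (c : ℝ) (f : ℝ → ℝ) : bvNorm (c • f) = |c| * bvNorm f := by
  simp only [bvNorm, eVariationOn.const_smul, ENNReal.toReal_mul, Pi.smul_apply, smul_eq_mul,
    abs_mul, coe_nnnorm, Real.norm_eq_abs, ENNReal.coe_toReal]
  ring

theorem bvNorm_const_add_le (a : ℝ) (f : ℝ → ℝ) : bvNorm (fun t => a + f t) ≤ |a| + bvNorm f := by
  simp only [bvNorm, eVariationOn.const_add]
  linarith [abs_add_le a (f 0)]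

theorem le_max_mul_pow_of_le_mul_pow_add_two {u : ℕ → ℝ} {ρ c₀ c₁ c₂ N : ℝ} (hρ : 0 < ρ)
    (hN : 0 ≤ N) (h₀ : u 0 ≤ c₀ * N) (h₁ : u 1 ≤ c₁ * N)
    (h₂ : ∀ n, u (n + 2) ≤ c₂ * ρ ^ n * N) (n : ℕ) :
    u n ≤ max c₀ (max (c₁ / ρ) (c₂ / ρ ^ 2)) * ρ ^ n * N := by
  rcases n with _ | _ | n
  · simpa using h₀.trans (mul_le_mul_of_nonneg_right (le_max_left _ _) hN)
  · calc u 1 ≤ c₁ / ρ * ρ ^ 1 * N := by field_simp; exact h₁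
      _ ≤ _ := by gcongr; exact (le_max_left _ _).trans (le_max_right _ _)
  · calc u (n + 2) ≤ c₂ / ρ ^ 2 * ρ ^ (n + 2) * N := by
          convert h₂ n using 2; field_simp; ring
      _ ≤ _ := by gcongr; exact (le_max_right _ _).trans (le_max_right _ _)

section RankTwo

variable {R E : Type*} [CommRing R] [AddCommGroup E] [Module R E]

theorem LinearMap.map_smul_add_smul_of_map_add_eq_zero (γ : E →ₗ[R] R) {v w : E}
    (hγ : γ (v + w) = 0) (a b : R) : γ (a • v + b • w) = (a - b) * γ v := by
  rw [map_add, map_smul, map_smul, smul_eq_mul, smul_eq_mul, eq_neg_of_add_eq_zero_right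
    ((map_add γ v w).symm.trans hγ)]
  ring

def rankTwoMap (α β : E →ₗ[R] R) (v w : E) (y : E) : E := α y • v + β y • w

variable {α β : E →ₗ[R] R} {v w : E}

theorem rankTwoMap_rankTwoMap (hα : α (v + w) = 0) (hβ : β (v + w) = 0) (y : E) :
    rankTwoMap α β v w (rankTwoMap α β v w y) = (α y - β y) • rankTwoMap α β v w v := by
  simp only [rankTwoMap, α.map_smul_add_smul_of_map_add_eq_zero hα,
    β.map_smul_add_smul_of_map_add_eq_zero hβ, smul_add, mul_smul]

theorem sub_apply_rankTwoMap (hα : α (v + w) = 0) (hβ : β (v + w) = 0) (y : E) :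
    α (rankTwoMap α β v w y) - β (rankTwoMap α β v w y) = (α y - β y) * (α v - β v) := by
  simp only [rankTwoMap, α.map_smul_add_smul_of_map_add_eq_zero hα,
    β.map_smul_add_smul_of_map_add_eq_zero hβ]
  ring

theorem rankTwoMap_iterate_add_two (hα : α (v + w) = 0) (hβ : β (v + w) = 0) (n : ℕ) (x : E) :
    (rankTwoMap α β v w)^[n + 2] x =
      ((α x - β x) * (α v - β v) ^ n) • rankTwoMap α β v w v := by
  induction n generalizing x with
  | zero => simp [rankTwoMap_rankTwoMap hα hβ]
  | succ n ih =>
    rw [Function.iterate_succ_apply, ih, sub_apply_rankTwoMap hα hβ]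
    rw [pow_succ', mul_assoc]

end RankTwo

section RankTwoBV

variable {α β : (ℝ → ℝ) →ₗ[ℝ] ℝ} {v w x : ℝ → ℝ} {B D : ℝ}

theorem bvNorm_rankTwoMap_le (hvw : v + w = 1) (hβ : |β x| ≤ B * bvNorm x)
    (hαβ : |α x - β x| ≤ D * bvNorm x) :
    bvNorm (rankTwoMap α β v w x) ≤ (B + D * bvNorm v) * bvNorm x := by
  have hx : rankTwoMap α β v w x = fun t => β x + (α x - β x) * v t := by
    funext t
    simp only [rankTwoMap, Pi.add_apply, Pi.smul_apply, smul_eq_mul]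
    have hvwt : v t + w t = 1 := congrFun hvw t
    linear_combination β x * hvwt
  calc bvNorm (rankTwoMap α β v w x) ≤ |β x| + |α x - β x| * bvNorm v := by
        rw [hx, ← bvNorm_smul]
        exact bvNorm_const_add_le _ _
    _ ≤ B * bvNorm x + D * bvNorm x * bvNorm v :=
        add_le_add hβ (mul_le_mul_of_nonneg_right hαβ (bvNorm_nonneg v))
    _ = (B + D * bvNorm v) * bvNorm x := by ring

theorem bvNorm_rankTwoMap_iterate_add_two_le (hα : α 1 = 0) (hβ : β 1 = 0) (hvw : v + w = 1)
    (hαβ : |α x - β x| ≤ D * bvNorm x) {ρ : ℝ} (hρ : |α v - β v| ≤ ρ) (n : ℕ) :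
    bvNorm ((rankTwoMap α β v w)^[n + 2] x) ≤
      D * ρ ^ n * bvNorm (rankTwoMap α β v w v) * bvNorm x := by
  rw [← hvw] at hα hβ
  calc bvNorm ((rankTwoMap α β v w)^[n + 2] x)
      = |α x - β x| * |α v - β v| ^ n * bvNorm (rankTwoMap α β v w v) := by
        rw [rankTwoMap_iterate_add_two hα hβ, bvNorm_smul, abs_mul, abs_pow]
    _ ≤ D * bvNorm x * ρ ^ n * bvNorm (rankTwoMap α β v w v) := by
        gcongr
        · exact bvNorm_nonneg _
        · exact (abs_nonneg _).trans hαβ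
    _ = D * ρ ^ n * bvNorm (rankTwoMap α β v w v) * bvNorm x := by ring

end RankTwoBV

theorem stmt_15_general (α β : (ℝ → ℝ) →ₗ[ℝ] ℝ) (v w : ℝ → ℝ)
    (hα1 : α (fun _ => 1) = 0) (hβ1 : β (fun _ => 1) = 0)
    (hvw : ∀ t : ℝ, v t + w t = 1)
    (B D : ℝ)
    (hβ : ∀ x, IsCBV x → |β x| ≤ B * bvNorm x)
    (hαβ : ∀ x, IsCBV x → |α x - β x| ≤ D * bvNorm x) :
    (∀ (n : ℕ) (x : ℝ → ℝ), IsCBV x →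
      bvNorm ((fun y : ℝ → ℝ => fun t => α y * v t + β y * w t)^[n + 2] x) ≤
        D * |α v - β v| ^ n * bvNorm (fun t => α v * v t + β v * w t) * bvNorm x) ∧
    ∀ ρ : ℝ, |α v - β v| < ρ → ∃ C : ℝ, ∀ (n : ℕ) (x : ℝ → ℝ), IsCBV x →
      bvNorm ((fun y : ℝ → ℝ => fun t => α y * v t + β y * w t)^[n] x) ≤
        C * ρ ^ n * bvNorm x := by
  have hvw' : v + w = 1 := funext hvw
  refine ⟨fun n x hx => bvNorm_rankTwoMap_iterate_add_two_le hα1 hβ1 hvw' (hαβ x hx) le_rfl n,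
    fun ρ hρ => ⟨max 1 (max ((B + D * bvNorm v) / ρ) (D * bvNorm (rankTwoMap α β v w v) / ρ ^ 2)),
      fun n x hx => ?_⟩⟩
  exact le_max_mul_pow_of_le_mul_pow_add_two ((abs_nonneg _).trans_lt hρ) (bvNorm_nonneg x)
    (u := fun n => bvNorm ((rankTwoMap α β v w)^[n] x)) (by simp)
    (bvNorm_rankTwoMap_le hvw' (hβ x hx) (hαβ x hx))
    (fun m => (bvNorm_rankTwoMap_iterate_add_two_le hα1 hβ1 hvw' (hαβ x hx) hρ.le m).trans_eq (by ring)) n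

/-- If `α[1] = β[1] = 0` and `v + w = 1`, then the powers of
`F₁(x) = α[x]v + β[x]w` satisfy
`‖F₁^{n+2}‖ ≤ ‖α-β‖·|α[v]-β[v]|ⁿ·‖α[v]v+β[v]w‖_{BV}`; in particular the spectral
radius of `F₁` is at most `|α[v]-β[v]|`. -/
theorem stmt_15 (α β : (ℝ → ℝ) →ₗ[ℝ] ℝ) (v w : ℝ → ℝ)
    (hv : IsCBV v) (hw : IsCBV w)
    (hα1 : α (fun _ => 1) = 0) (hβ1 : β (fun _ => 1) = 0)
    (hvw : ∀ t : ℝ, v t + w t = 1)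
    (A B D : ℝ)
    (hα : ∀ x, IsCBV x → |α x| ≤ A * bvNorm x)
    (hβ : ∀ x, IsCBV x → |β x| ≤ B * bvNorm x)
    (hαβ : ∀ x, IsCBV x → |α x - β x| ≤ D * bvNorm x) :
    (∀ (n : ℕ) (x : ℝ → ℝ), IsCBV x →
      bvNorm ((fun y : ℝ → ℝ => fun t => α y * v t + β y * w t)^[n + 2] x) ≤
        D * |α v - β v| ^ n * bvNorm (fun t => α v * v t + β v * w t) * bvNorm x) ∧
    ∀ ρ : ℝ, |α v - β v| < ρ → ∃ C : ℝ, ∀ (n : ℕ) (x : ℝ → ℝ), IsCBV x →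
      bvNorm ((fun y : ℝ → ℝ => fun t => α y * v t + β y * w t)^[n] x) ≤
        C * ρ ^ n * bvNorm x :=
  stmt_15_general α β v w hα1 hβ1 hvw B D hβ hαβ
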